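/- arXiv:2307.00392 — 5 statements merged into one kernel-verified Lean document; each statement's English description precedes it below -/
import Mathlib

section
/- Interpolation inequality for the y-iterates (appendix lemma, eq. (C1)). Under the stated hypotheses, −‖y⁺ − y*‖² ≤ ((1 − ϑ₁)/ϑ₁)‖y_f − y*‖² − (1/ϑ₂)‖y_f⁺ − y*‖² − (1/ϑ₁ − 1/ϑ₂)‖y_g − y*‖² + (ϑ₂ − ϑ₁)‖y⁺ − y‖². -/
open RealInnerProductSpace

/-! With `z := ϑ₁ y⁺ + (1 − ϑ₁) y_f` one has `y_f⁺ = (1 − s) y_g + s z` for `s = ϑ₂/ϑ₁`, since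
`z − y_g = ϑ₁ (y⁺ − y)`. Expanding `‖y_f⁺ − y*‖²` along this affine combination turns the right-hand
side into `((1 − ϑ₁)‖y_f − y*‖² − ‖z − y*‖²)/ϑ₁`, and convexity of `‖· − y*‖²` along
`z = ϑ₁ y⁺ + (1 − ϑ₁) y_f` bounds this below by `−‖y⁺ − y*‖²`. -/

theorem norm_smul_add_smul_sq_of_add_eq_one {F : Type*} [NormedAddCommGroup F]
    [InnerProductSpace ℝ F] {a b : ℝ} (hab : a + b = 1) (x y : F) :
    ‖a • x + b • y‖ ^ 2 = a * ‖x‖ ^ 2 + b * ‖y‖ ^ 2 - a * b * ‖x - y‖ ^ 2 := by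
  obtain rfl := eq_sub_of_add_eq' hab
  rw [norm_add_sq_real, norm_sub_sq_real, norm_smul, norm_smul, real_inner_smul_left,
    real_inner_smul_right, mul_pow, mul_pow, Real.norm_eq_abs, Real.norm_eq_abs, sq_abs, sq_abs]
  ring

/-- Interpolation inequality for the y-iterates (appendix lemma, eq. (C1)).
Let `H` be a real inner product space, `0 < ϑ₁ ≤ 1`, `ϑ₁ ≤ ϑ₂`,
`y_g := ϑ₁ y + (1 − ϑ₁) y_f` and `y_f⁺ := y_g + ϑ₂(y⁺ − y)`.  Then
`−‖y⁺ − y*‖² ≤ ((1 − ϑ₁)/ϑ₁)‖y_f − y*‖² − (1/ϑ₂)‖y_f⁺ − y*‖²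
  − (1/ϑ₁ − 1/ϑ₂)‖y_g − y*‖² + (ϑ₂ − ϑ₁)‖y⁺ − y‖²`. -/
theorem y_interpolation_inequality
    {H : Type*} [NormedAddCommGroup H] [InnerProductSpace ℝ H]
    (ϑ₁ ϑ₂ : ℝ) (hϑ₁pos : 0 < ϑ₁) (hϑ₁le : ϑ₁ ≤ 1) (hϑ : ϑ₁ ≤ ϑ₂)
    (y yf yplus ystar : H)
    (yg : H) (hyg : yg = ϑ₁ • y + (1 - ϑ₁) • yf)
    (yfplus : H) (hyfplus : yfplus = yg + ϑ₂ • (yplus - y)) :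
    -‖yplus - ystar‖ ^ 2 ≤
      ((1 - ϑ₁) / ϑ₁) * ‖yf - ystar‖ ^ 2 - (1 / ϑ₂) * ‖yfplus - ystar‖ ^ 2
        - (1 / ϑ₁ - 1 / ϑ₂) * ‖yg - ystar‖ ^ 2 + (ϑ₂ - ϑ₁) * ‖yplus - y‖ ^ 2 := by
  have hϑ₂pos : 0 < ϑ₂ := hϑ₁pos.trans_le hϑ
  set z := ϑ₁ • yplus + (1 - ϑ₁) • yf with hz
  have hextrapolate : yfplus - ystar = (1 - ϑ₂ / ϑ₁) • (yg - ystar) + (ϑ₂ / ϑ₁) • (z - ystar) := by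
    rw [hyfplus, hyg, hz]
    match_scalars <;> field_simp <;> ring
  have hstep : yg - ystar - (z - ystar) = ϑ₁ • (y - yplus) := by
    rw [hyg, hz]; module
  have hconvex : ‖z - ystar‖ ^ 2 = ϑ₁ * ‖yplus - ystar‖ ^ 2 + (1 - ϑ₁) * ‖yf - ystar‖ ^ 2
      - ϑ₁ * (1 - ϑ₁) * ‖yplus - yf‖ ^ 2 := by
    have h := norm_smul_add_smul_sq_of_add_eq_one (add_sub_cancel ϑ₁ 1)
      (yplus - ystar) (yf - ystar)
    rwa [sub_sub_sub_cancel_right,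
      show ϑ₁ • (yplus - ystar) + (1 - ϑ₁) • (yf - ystar) = z - ystar by rw [hz]; module] at h
  have hrhs : ((1 - ϑ₁) / ϑ₁) * ‖yf - ystar‖ ^ 2 - (1 / ϑ₂) * ‖yfplus - ystar‖ ^ 2
        - (1 / ϑ₁ - 1 / ϑ₂) * ‖yg - ystar‖ ^ 2 + (ϑ₂ - ϑ₁) * ‖yplus - y‖ ^ 2
      = ((1 - ϑ₁) * ‖yf - ystar‖ ^ 2 - ‖z - ystar‖ ^ 2) / ϑ₁ := by
    rw [hextrapolate, norm_smul_add_smul_sq_of_add_eq_one (sub_add_cancel 1 _), hstep, norm_smul,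
      mul_pow, Real.norm_eq_abs, sq_abs, ← norm_neg (y - yplus), neg_sub]
    field_simp
    ring
  rw [hrhs, le_div_iff₀ hϑ₁pos]
  linarith [hconvex, mul_nonneg (mul_nonneg hϑ₁pos.le (sub_nonneg.2 hϑ₁le)) (sq_nonneg ‖yplus - yf‖)]
end

section
/- Control of the correction sequence m (appendix lemma, eq. (C2)). Under the stated hypotheses, ‖m‖_P² ≤ 8χ²κ²ν⁻²‖y_g + z_g‖_P² + 4χ(1 − (4χ)⁻¹)‖m‖_P² − 4χ‖m⁺‖_P². -/
open MeasureTheory RealInnerProductSpace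
open scoped ENNReal

noncomputable section

/-- The space `E = (ℝ^d)^n` with the standard Euclidean inner product. -/
abbrev Vs (d n : ℕ) : Type := EuclideanSpace ℝ (Fin n × Fin d)

/-- The consensus subspace `L = {(x₁,…,xₙ) : x₁ = ⋯ = xₙ}` of `(ℝ^d)^n`. -/
def consensus (d n : ℕ) : Submodule ℝ (Vs d n) where
  carrier := {x | ∀ i j : Fin n, ∀ k : Fin d, x (i, k) = x (j, k)}
  add_mem' := by
    intro a b ha hb i j k
    simp only [Set.mem_setOf_eq] at ha hb
    simp [PiLp.add_apply, ha i j k, hb i j k]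
  zero_mem' := by intro i j k; rfl
  smul_mem' := by
    intro c a ha i j k
    simp only [Set.mem_setOf_eq] at ha
    simp [PiLp.smul_apply, ha i j k]

/-- Orthogonal projection of `E` onto `L⊥`. -/
def projP (d n : ℕ) (x : Vs d n) : Vs d n :=
  (Submodule.orthogonalProjectionOnto (consensus d n)ᗮ x : Vs d n)

/-- The Kronecker product `W ⊗ I_d` acting on `E = (ℝ^d)^n`. -/
def kron {d n : ℕ} (W : Matrix (Fin n) (Fin n) ℝ) (x : Vs d n) : Vs d n :=
  WithLp.toLp 2 (fun p => ∑ j, W p.1 j * x (j, p.2))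

/-!
Projecting `m⁺ = x - (W ⊗ I_d) x` (with `x = v + m`) onto `L⊥` only sees `u = P x`, because
`W ⊗ I_d` kills `L`; since `P` is a contraction, `‖m⁺‖_P² ≤ ‖(W ⊗ I_d) u - u‖² ≤ (1 - χ⁻¹)‖u‖²`,
where `‖u‖ ≤ κν⁻¹‖y_g + z_g‖_P + ‖m‖_P`. What remains is the scalar inequality
`4(χ - 1)(p + q)² ≤ 8χ²p² + (4χ - 2)q²`, which follows from `(2(χ - 1)p - q)² ≥ 0`.
-/

section Projection

variable {𝕜 E : Type*} [RCLike 𝕜] [NormedAddCommGroup E] [InnerProductSpace 𝕜 E]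
  {K : Submodule 𝕜 E} [K.HasOrthogonalProjection]

theorem Submodule.starProjection_orthogonal_sub_map_eq (T : E →ₗ[𝕜] E)
    (hT : K ≤ LinearMap.ker T) (x : E) :
    Kᗮ.starProjection (x - T x) =
      Kᗮ.starProjection (Kᗮ.starProjection x - T (Kᗮ.starProjection x)) := by
  set u := Kᗮ.starProjection x
  have hxu : x - u ∈ K := by
    simp only [u, Submodule.starProjection_orthogonal_val, sub_sub_cancel]
    exact K.starProjection_apply_mem x
  have hTxu : T x = T u := by
    rw [← sub_eq_zero, ← map_sub]
    exact hT hxu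
  have hsplit : x - T x = (u - T u) + (x - u) := by
    rw [hTxu]
    abel
  rw [hsplit, map_add, Submodule.starProjection_orthogonal_apply_eq_zero hxu, add_zero]

theorem Submodule.norm_starProjection_orthogonal_sub_map_le (T : E →ₗ[𝕜] E)
    (hT : K ≤ LinearMap.ker T) (x : E) :
    ‖Kᗮ.starProjection (x - T x)‖ ≤ ‖T (Kᗮ.starProjection x) - Kᗮ.starProjection x‖ := by
  rw [K.starProjection_orthogonal_sub_map_eq T hT, norm_sub_rev]
  exact Kᗮ.norm_starProjection_apply_le _

end Projection

theorem projP_eq_starProjection (d n : ℕ) (x : Vs d n) :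
    projP d n x = (consensus d n)ᗮ.starProjection x :=
  rfl

def kronLinearMap {d n : ℕ} (W : Matrix (Fin n) (Fin n) ℝ) : Vs d n →ₗ[ℝ] Vs d n where
  toFun := kron W
  map_add' x y := by
    ext p
    simp [kron, mul_add, Finset.sum_add_distrib]
  map_smul' c x := by
    ext p
    simp [kron, Finset.mul_sum, mul_left_comm]

theorem consensus_le_ker_kronLinearMap {d n : ℕ} (W : Matrix (Fin n) (Fin n) ℝ)
    (hW : W.mulVec (fun _ => 1) = 0) : consensus d n ≤ LinearMap.ker (kronLinearMap W) := by
  intro q hq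
  ext p
  have hrow : ∑ j, W p.1 j = 0 := by
    simpa [Matrix.mulVec, dotProduct] using congrFun hW p.1
  show ∑ j, W p.1 j * q (j, p.2) = 0
  simp_rw [hq _ p.1 p.2, ← Finset.sum_mul, hrow, zero_mul]

theorem four_mul_sub_one_mul_add_sq_le {χ : ℝ} (hχ : 1 ≤ χ) (p q : ℝ) :
    4 * (χ - 1) * (p + q) ^ 2 ≤ 8 * χ ^ 2 * p ^ 2 + (4 * χ - 2) * q ^ 2 := by
  nlinarith [sq_nonneg (2 * (χ - 1) * p - q),
    mul_nonneg (by linarith : 0 ≤ 12 * χ - 4) (sq_nonneg p)]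

theorem sq_le_of_sq_le_one_sub_inv_mul_sq {χ U p q c : ℝ} (hχ : 1 ≤ χ) (hU : 0 ≤ U)
    (hUpq : U ≤ p + q) (hc : c ^ 2 ≤ (1 - χ⁻¹) * U ^ 2) :
    q ^ 2 ≤ 8 * χ ^ 2 * p ^ 2 + 4 * χ * (1 - (4 * χ)⁻¹) * q ^ 2 - 4 * χ * c ^ 2 := by
  have hχ0 : χ ≠ 0 := by positivity
  have hc' : 4 * χ * c ^ 2 ≤ 4 * (χ - 1) * U ^ 2 := by
    calc 4 * χ * c ^ 2 ≤ 4 * χ * ((1 - χ⁻¹) * U ^ 2) := by gcongr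
      _ = 4 * (χ - 1) * U ^ 2 := by field_simp
  have hU2 : 4 * (χ - 1) * U ^ 2 ≤ 4 * (χ - 1) * (p + q) ^ 2 := by gcongr
  have hcoef : 4 * χ * (1 - (4 * χ)⁻¹) = 4 * χ - 1 := by field_simp
  rw [hcoef]
  linarith [four_mul_sub_one_mul_add_sq_le hχ p q]

theorem correction_sequence_control_general
    {d n : ℕ}
    (W : Matrix (Fin n) (Fin n) ℝ)
    (hWker : ∀ v : Fin n → ℝ, W.mulVec v = 0 ↔ ∃ c, ∀ i, v i = c)
    (χ : ℝ) (hχ : 1 ≤ χ)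
    (hcontr : ∀ u ∈ (consensus d n)ᗮ, ‖kron W u - u‖ ^ 2 ≤ (1 - χ⁻¹) * ‖u‖ ^ 2)
    (κ ν : ℝ)
    (yg zg m : Vs d n)
    (v : Vs d n) (hv : v = (κ * ν⁻¹) • (yg + zg))
    (mp : Vs d n) (hmp : mp = v + m - kron W (v + m)) :
    ‖projP d n m‖ ^ 2 ≤
      8 * χ ^ 2 * κ ^ 2 * ν⁻¹ ^ 2 * ‖projP d n (yg + zg)‖ ^ 2
        + 4 * χ * (1 - (4 * χ)⁻¹) * ‖projP d n m‖ ^ 2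
        - 4 * χ * ‖projP d n mp‖ ^ 2 := by
  have hker := consensus_le_ker_kronLinearMap (d := d) W ((hWker _).mpr ⟨1, fun _ => rfl⟩)
  set u := projP d n (v + m)
  have hmp_le : ‖projP d n mp‖ ≤ ‖kron W u - u‖ := by
    rw [hmp, projP_eq_starProjection]
    exact Submodule.norm_starProjection_orthogonal_sub_map_le (kronLinearMap W) hker (v + m)
  have hu_le : ‖u‖ ≤ |κ * ν⁻¹| * ‖projP d n (yg + zg)‖ + ‖projP d n m‖ := by
    calc ‖u‖ = ‖(κ * ν⁻¹) • projP d n (yg + zg) + projP d n m‖ := by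
          simp only [u, hv, projP_eq_starProjection, map_add, map_smul]
      _ ≤ _ := by
          rw [← Real.norm_eq_abs, ← norm_smul]
          exact norm_add_le _ _
  have hmp_sq : ‖projP d n mp‖ ^ 2 ≤ (1 - χ⁻¹) * ‖u‖ ^ 2 :=
    (pow_le_pow_left₀ (norm_nonneg _) hmp_le 2).trans
      (hcontr u (Submodule.starProjection_apply_mem _ _))
  have key := sq_le_of_sq_le_one_sub_inv_mul_sq hχ (norm_nonneg u) hu_le hmp_sq
  rwa [mul_pow, sq_abs, mul_pow, ← mul_assoc, ← mul_assoc] at key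

/-- Control of the correction sequence `m` (appendix lemma, eq. (C2)):
with `v := κν⁻¹(y_g + z_g)` and `m⁺ := v + m − (W ⊗ I_d)(v + m)`,
`‖m‖_P² ≤ 8χ²κ²ν⁻²‖y_g + z_g‖_P² + 4χ(1 − (4χ)⁻¹)‖m‖_P² − 4χ‖m⁺‖_P²`. -/
theorem correction_sequence_control
    {d n : ℕ} (hd : 0 < d) (hn : 0 < n)
    (W : Matrix (Fin n) (Fin n) ℝ) (hWsymm : W.IsSymm) (hWpsd : W.PosSemidef)
    (hWker : ∀ v : Fin n → ℝ, W.mulVec v = 0 ↔ ∃ c, ∀ i, v i = c)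
    (χ : ℝ) (hχ : 1 ≤ χ)
    (hcontr : ∀ u ∈ (consensus d n)ᗮ, ‖kron W u - u‖ ^ 2 ≤ (1 - χ⁻¹) * ‖u‖ ^ 2)
    (κ ν : ℝ) (hκ : 0 < κ) (hν : 0 < ν)
    (yg zg m : Vs d n)
    (v : Vs d n) (hv : v = (κ * ν⁻¹) • (yg + zg))
    (mp : Vs d n) (hmp : mp = v + m - kron W (v + m)) :
    ‖projP d n m‖ ^ 2 ≤
      8 * χ ^ 2 * κ ^ 2 * ν⁻¹ ^ 2 * ‖projP d n (yg + zg)‖ ^ 2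
        + 4 * χ * (1 - (4 * χ)⁻¹) * ‖projP d n m‖ ^ 2
        - 4 * χ * ‖projP d n mp‖ ^ 2 :=
  correction_sequence_control_general W hWker χ hχ hcontr κ ν yg zg m v hv mp hmp
end
end

section
/- Lower bound on the coupling inner product (appendix lemma, eq. (C3)). Under the stated hypotheses, 2⟨y_g + z_g − (y* + z*), y + z − (y* + z*)⟩ ≥ 2‖y_g + z_g − (y* + z*)‖² + ((1 − ϑ₂/2)/ϑ₂)·(‖y_g + z_g − (y* + z*)‖² − ‖y_f + z_f − (y* + z*)‖²). -/
open RealInnerProductSpace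

/-- Lower bound on the coupling inner product (appendix lemma, eq. (C3)).
Let `H` be a real inner product space, `0 < ϑ₂ ≤ 2`, `ϑ₁ := (1/ϑ₂ + 1/2)⁻¹`,
`y_g := ϑ₁ y + (1 − ϑ₁) y_f` and `z_g := ϑ₁ z + (1 − ϑ₁) z_f`.  Then
`2⟪y_g + z_g − (y* + z*), y + z − (y* + z*)⟫ ≥ 2‖y_g + z_g − (y* + z*)‖²
  + ((1 − ϑ₂/2)/ϑ₂)(‖y_g + z_g − (y* + z*)‖² − ‖y_f + z_f − (y* + z*)‖²)`. -/
theorem coupling_inner_product_lower_bound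
    {H : Type*} [NormedAddCommGroup H] [InnerProductSpace ℝ H]
    (ϑ₂ : ℝ) (hϑ₂pos : 0 < ϑ₂) (hϑ₂le : ϑ₂ ≤ 2)
    (ϑ₁ : ℝ) (hϑ₁ : ϑ₁ = (1 / ϑ₂ + 1 / 2)⁻¹)
    (y yf z zf ystar zstar : H)
    (yg : H) (hyg : yg = ϑ₁ • y + (1 - ϑ₁) • yf)
    (zg : H) (hzg : zg = ϑ₁ • z + (1 - ϑ₁) • zf) :
    2 * ⟪yg + zg - (ystar + zstar), y + z - (ystar + zstar)⟫ ≥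
      2 * ‖yg + zg - (ystar + zstar)‖ ^ 2
        + ((1 - ϑ₂ / 2) / ϑ₂) *
            (‖yg + zg - (ystar + zstar)‖ ^ 2 - ‖yf + zf - (ystar + zstar)‖ ^ 2) := by
  set g := yg + zg - (ystar + zstar) with hg
  set f := yf + zf - (ystar + zstar) with hf
  set u := y + z - (ystar + zstar) with hu
  have hϑ₁pos : 0 < ϑ₁ := by
    rw [hϑ₁]; positivity
  have hhalf : (1 : ℝ) / 2 ≤ 1 / ϑ₂ := one_div_le_one_div_of_le hϑ₂pos hϑ₂le
  have hϑ₁le : ϑ₁ ≤ 1 := by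
    rw [hϑ₁]
    apply inv_le_one_of_one_le₀
    linarith
  have hgu : g = ϑ₁ • u + (1 - ϑ₁) • f := by
    rw [hg, hf, hu, hyg, hzg]; module
  have key : ‖g‖ ^ 2 = ϑ₁ * ⟪g, u⟫ + (1 - ϑ₁) * ⟪g, f⟫ := by
    have h := congrArg (fun w => ⟪g, w⟫) hgu
    simpa [inner_add_right, inner_smul_right, real_inner_self_eq_norm_sq] using h
  have hib : ⟪g, f⟫ ≤ (‖g‖ ^ 2 + ‖f‖ ^ 2) / 2 := by
    nlinarith [real_inner_le_norm g f, sq_nonneg (‖g‖ - ‖f‖), norm_nonneg g, norm_nonneg f]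
  have hc : (1 - ϑ₂ / 2) / ϑ₂ * ϑ₁ = 1 - ϑ₁ := by
    rw [hϑ₁]
    field_simp
    ring
  nlinarith [key, mul_le_mul_of_nonneg_left hib (by linarith : (0:ℝ) ≤ 1 - ϑ₁), hc,
    hϑ₁pos, sq_nonneg ‖g‖, sq_nonneg ‖f‖]
end

section
/- Explicit step-size tuning bound (content of Corollary 2, case of small tuned β). Suppose the error after N steps satisfies r_N ≤ r₀·exp(−a√β·N) + b·σ²·√β + c·Δ²/√β, where √β := ln(max{2, a·r₀·N/(b·σ²)})/(a·N). Then r_N ≤ (b·σ²/(a·N))·(1 + ln(max{2, a·r₀·N/(b·σ²)})) + (a·c·Δ²·N)/ln 2. -/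
/-! With `M := max 2 (a r₀ N / (b σ²))` the tuned step gives `a √β N = ln M`, so the bias term
`r₀ e^{-a√β N} = r₀ / M` is at most `b σ² / (a N)`, the variance term `b σ² √β` equals
`(b σ² / (a N)) ln M`, and since `ln M ≥ ln 2` the drift term `c Δ² / √β` is at most
`a c Δ² N / ln 2`. -/

open Real

lemma log_two_le_log_max_two (x : ℝ) : log 2 ≤ log (max 2 x) :=
  log_le_log two_pos (le_max_left _ _)

lemma mul_exp_neg_log_max_two_le {r K s : ℝ} (hK : 0 < K) (hs : 0 < s) :
    r * exp (-log (max 2 (s * r / K))) ≤ K / s := by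
  have hM : 0 < max 2 (s * r / K) := two_pos.trans_le (le_max_left _ _)
  have hr : s * r ≤ max 2 (s * r / K) * K := (div_le_iff₀ hK).1 (le_max_right _ _)
  rw [exp_neg, exp_log hM, ← div_eq_mul_inv, div_le_div_iff₀ hM hs]
  linarith

lemma div_div_le_div_log_two {D L s : ℝ} (hD : 0 ≤ D) (hs : 0 < s) (hL : log 2 ≤ L) :
    D / (L / s) ≤ D * s / log 2 := by
  rw [div_div_eq_mul_div]
  exact div_le_div_of_nonneg_left (by positivity) (log_pos one_lt_two) hL

theorem step_size_tuning_bound_general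
    (rN r0 a b c σ2 Δ2 N : ℝ)
    (ha : 0 < a) (hb : 0 < b) (hc : 0 ≤ c)
    (hσ2 : 0 < σ2) (hΔ2 : 0 ≤ Δ2) (hN : 0 < N)
    (sqβ : ℝ) (hsqβ : sqβ = Real.log (max 2 (a * r0 * N / (b * σ2))) / (a * N))
    (hrec : rN ≤ r0 * Real.exp (-(a * sqβ * N)) + b * σ2 * sqβ + c * Δ2 / sqβ) :
    rN ≤ (b * σ2 / (a * N)) * (1 + Real.log (max 2 (a * r0 * N / (b * σ2))))
      + a * c * Δ2 * N / Real.log 2 := by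
  have haN : 0 < a * N := mul_pos ha hN
  have hratio : a * r0 * N = a * N * r0 := by ring
  rw [hratio] at hsqβ ⊢
  set L := log (max 2 (a * N * r0 / (b * σ2)))
  have hexp : a * sqβ * N = L := by
    rw [hsqβ]
    field_simp
  have hbias := mul_exp_neg_log_max_two_le (r := r0) (mul_pos hb hσ2) haN
  have hdrift :=
    div_div_le_div_log_two (L := L) (mul_nonneg hc hΔ2) haN (log_two_le_log_max_two _)
  rw [hexp, hsqβ] at hrec
  calc rN ≤ r0 * exp (-L) + b * σ2 * (L / (a * N)) + c * Δ2 / (L / (a * N)) := hrec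
    _ ≤ b * σ2 / (a * N) + b * σ2 * (L / (a * N)) + c * Δ2 * (a * N) / log 2 := by
        gcongr
    _ = _ := by ring

/-- Explicit step-size tuning bound (content of Corollary 2, case of small tuned β).
Suppose the error after `N` steps satisfies
`r_N ≤ r₀·exp(−a·√β·N) + b·σ²·√β + c·Δ²/√β`, where
`√β := ln(max{2, a·r₀·N/(b·σ²)})/(a·N)`.  Then
`r_N ≤ (b·σ²/(a·N))·(1 + ln(max{2, a·r₀·N/(b·σ²)})) + (a·c·Δ²·N)/ln 2`. -/
theorem step_size_tuning_bound
    (rN r0 a b c σ2 Δ2 N : ℝ)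
    (hr0 : 0 < r0) (ha : 0 < a) (hb : 0 < b) (hc : 0 ≤ c)
    (hσ2 : 0 < σ2) (hΔ2 : 0 ≤ Δ2) (hN : 0 < N)
    (sqβ : ℝ) (hsqβ : sqβ = Real.log (max 2 (a * r0 * N / (b * σ2))) / (a * N))
    (hrec : rN ≤ r0 * Real.exp (-(a * sqβ * N)) + b * σ2 * sqβ + c * Δ2 / sqβ) :
    rN ≤ (b * σ2 / (a * N)) * (1 + Real.log (max 2 (a * r0 * N / (b * σ2))))
      + a * c * Δ2 * N / Real.log 2 :=
  step_size_tuning_bound_general rN r0 a b c σ2 Δ2 N ha hb hc hσ2 hΔ2 hN sqβ hsqβ hrec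
end

section
/- Smoothing sandwich and Lipschitz continuity (part of Lemma on the smoothed function). If F : ℝ^D → ℝ is convex and M₂-Lipschitz with respect to the Euclidean norm (|F(y) − F(x)| ≤ M₂‖y − x‖ for all x, y), then for every x ∈ ℝ^D one has F(x) ≤ F_γ(x) ≤ F(x) + γM₂, and moreover F_γ is M₂-Lipschitz: |F_γ(y) − F_γ(x)| ≤ M₂‖y − x‖ for all x, y ∈ ℝ^D. -/
open MeasureTheory
open scoped ENNReal

noncomputable section

/-- The uniform probability distribution on the closed Euclidean unit ball of `ℝ^D`
(normalized restriction of Lebesgue measure). -/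
def uniformBall (D : ℕ) : Measure (EuclideanSpace ℝ (Fin D)) :=
  (volume (Metric.closedBall (0 : EuclideanSpace ℝ (Fin D)) 1))⁻¹ •
    volume.restrict (Metric.closedBall (0 : EuclideanSpace ℝ (Fin D)) 1)

/-- The smoothed function `F_γ(x) := E[F(x + γ ẽ)]`, with `ẽ` uniform on the closed
Euclidean unit ball. -/
def smoothed (D : ℕ) (F : EuclideanSpace ℝ (Fin D) → ℝ) (γ : ℝ)
    (x : EuclideanSpace ℝ (Fin D)) : ℝ :=
  ∫ u, F (x + γ • u) ∂(uniformBall D)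

/-! The uniform distribution on the ball is symmetric, so its mean is `0` and Jensen's inequality
gives `F x = F (E[x + γ ẽ]) ≤ F_γ x`. Since `‖γ ẽ‖ ≤ γ` almost surely, the Lipschitz bound gives
`F (x + γ ẽ) ≤ F x + γ M₂` pointwise, hence `F_γ x ≤ F x + γ M₂`; and averaging the pointwise bound
`|F (y + γ u) - F (x + γ u)| ≤ M₂ ‖y - x‖` over `u` shows that `F_γ` is `M₂`-Lipschitz. -/

open Metric Set ProbabilityTheory
open scoped NNReal Pointwise

theorem MeasureTheory.Measure.isNegInvariant_restrict_of_neg_eq {E : Type*} [MeasurableSpace E]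
    [InvolutiveNeg E] [MeasurableNeg E] (μ : Measure E) [μ.IsNegInvariant] {s : Set E}
    (hs : -s = s) : (μ.restrict s).IsNegInvariant := by
  have hneg : MeasurableEmbedding (Neg.neg : E → E) := (MeasurableEquiv.neg E).measurableEmbedding
  have hs' : Neg.neg ⁻¹' s = s := by rw [Set.neg_preimage, hs]
  constructor
  nth_rw 1 [Measure.neg, ← hs']
  rw [← hneg.restrict_map, Measure.map_neg_eq_self]

instance MeasureTheory.Measure.isNegInvariant_smul {E : Type*} [MeasurableSpace E] [Neg E]
    (μ : Measure E) [μ.IsNegInvariant] (c : ℝ≥0∞) : (c • μ).IsNegInvariant :=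
  ⟨by rw [Measure.neg, Measure.map_smul, Measure.map_neg_eq_self]⟩

theorem integral_id_eq_zero_of_isNegInvariant {E : Type*} [NormedAddCommGroup E]
    [NormedSpace ℝ E] [MeasurableSpace E] [MeasurableNeg E] (μ : Measure E) [μ.IsNegInvariant] :
    ∫ u, u ∂μ = 0 := by
  have h := integral_neg_eq_self (fun u : E => u) μ
  rw [integral_neg, eq_comm] at h
  have h2 : (2 : ℝ) • ∫ u, u ∂μ = 0 := by
    rw [two_smul]
    nth_rw 2 [h]
    exact add_neg_cancel _
  exact (smul_eq_zero.mp h2).resolve_left two_ne_zero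

section UniformBall

variable (D : ℕ)

-- `uniformBall D` is definitionally the conditioned measure `volume[|closedBall 0 1]`.
instance isProbabilityMeasure_uniformBall : IsProbabilityMeasure (uniformBall D) :=
  cond_isProbabilityMeasure_of_finite (measure_closedBall_pos volume 0 one_pos).ne'
    (isCompact_closedBall 0 1).measure_lt_top.ne

instance isNegInvariant_uniformBall : (uniformBall D).IsNegInvariant := by
  unfold uniformBall
  have : (volume.restrict (closedBall (0 : EuclideanSpace ℝ (Fin D)) 1)).IsNegInvariant :=
    Measure.isNegInvariant_restrict_of_neg_eq _ (by simp [neg_closedBall])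
  infer_instance

theorem integral_id_uniformBall : ∫ u, u ∂(uniformBall D) = 0 :=
  integral_id_eq_zero_of_isNegInvariant _

theorem ae_norm_le_one_uniformBall : ∀ᵐ u ∂(uniformBall D), ‖u‖ ≤ 1 :=
  Measure.ae_smul_measure ((ae_restrict_mem measurableSet_closedBall).mono fun _ hu =>
    mem_closedBall_zero_iff.mp hu) _

variable {D}

theorem Continuous.integrable_uniformBall {G : Type*} [NormedAddCommGroup G]
    {f : EuclideanSpace ℝ (Fin D) → G} (hf : Continuous f) : Integrable f (uniformBall D) :=
  (hf.continuousOn.integrableOn_compact (isCompact_closedBall 0 1)).smul_measure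
    (ENNReal.inv_ne_top.mpr (measure_closedBall_pos volume 0 one_pos).ne')

end UniformBall

section Smoothing

variable {E : Type*} [NormedAddCommGroup E] {F : E → ℝ}

theorem LipschitzWith.integral_comp_add {α : Type*} [MeasurableSpace α] {ν : Measure α}
    [IsProbabilityMeasure ν] {K : ℝ≥0} (hF : LipschitzWith K F) {g : α → E}
    (hFi : ∀ x, Integrable (fun a => F (x + g a)) ν) :
    LipschitzWith K fun x => ∫ a, F (x + g a) ∂ν := by
  refine LipschitzWith.of_dist_le_mul fun x y => ?_
  rw [dist_eq_norm, ← integral_sub (hFi x) (hFi y)]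
  calc ‖∫ a, (F (x + g a) - F (y + g a)) ∂ν‖ ≤ K * dist x y * ν.real univ :=
        norm_integral_le_of_norm_le_const (.of_forall fun a => by
          simpa only [Real.dist_eq, dist_add_right, Real.norm_eq_abs] using
            hF.dist_le_mul (x + g a) (y + g a))
    _ = K * dist x y := by rw [probReal_univ, mul_one]

variable [NormedSpace ℝ E] [MeasurableSpace E] {μ : Measure E} [IsProbabilityMeasure μ] {γ : ℝ}

theorem ConvexOn.le_integral_comp_add_smul [CompleteSpace E] (hF : ConvexOn ℝ univ F)
    (hFc : Continuous F) (hμ : Integrable (fun u => u) μ) (hmean : ∫ u, u ∂μ = 0) (x : E)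
    (hFi : Integrable (fun u => F (x + γ • u)) μ) : F x ≤ ∫ u, F (x + γ • u) ∂μ := by
  have hsmul : Integrable (fun u => γ • u) μ := hμ.smul γ
  have hmean' : ∫ u, (x + γ • u) ∂μ = x := by
    rw [integral_add (integrable_const x) hsmul, integral_smul, hmean, smul_zero, add_zero,
      integral_const, probReal_univ, one_smul]
  have hJensen := hF.map_integral_le (f := fun u => x + γ • u) hFc.continuousOn isClosed_univ
    (.of_forall fun _ => mem_univ _) ((integrable_const x).add hsmul) hFi
  rwa [hmean'] at hJensen

theorem LipschitzWith.integral_comp_add_smul_le {K : ℝ≥0} (hF : LipschitzWith K F) (hγ : 0 ≤ γ)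
    (hμ : ∀ᵐ u ∂μ, ‖u‖ ≤ 1) (x : E) (hFi : Integrable (fun u => F (x + γ • u)) μ) :
    ∫ u, F (x + γ • u) ∂μ ≤ F x + γ * K := by
  have hbound : ∀ᵐ u ∂μ, F (x + γ • u) ≤ F x + γ * K := by
    filter_upwards [hμ] with u hu
    calc F (x + γ • u) ≤ F x + K * dist (x + γ • u) x := hF.le_add_mul _ _
      _ = F x + K * (γ * ‖u‖) := by
        rw [dist_eq_norm, add_sub_cancel_left, norm_smul, Real.norm_of_nonneg hγ]
      _ ≤ F x + γ * K := by nlinarith [mul_le_mul_of_nonneg_left hu (mul_nonneg K.coe_nonneg hγ)]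
  simpa using integral_mono_ae hFi (integrable_const _) hbound

end Smoothing

theorem nonneg_of_abs_sub_le_mul_norm {E : Type*} [NormedAddCommGroup E] [Nontrivial E]
    {F : E → ℝ} {M : ℝ} (hF : ∀ x y, |F y - F x| ≤ M * ‖y - x‖) : 0 ≤ M := by
  obtain ⟨v, hv⟩ := exists_ne (0 : E)
  have h := (abs_nonneg _).trans (hF 0 v)
  rw [sub_zero] at h
  exact nonneg_of_mul_nonneg_left h (norm_pos_iff.mpr hv)

/-- Smoothing sandwich and Lipschitz continuity: if `F : ℝ^D → ℝ` is convex and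
`M₂`-Lipschitz in the Euclidean norm, then `F(x) ≤ F_γ(x) ≤ F(x) + γ M₂` for every `x`,
and `F_γ` is `M₂`-Lipschitz. -/
theorem smoothing_sandwich_and_lipschitz
    (D : ℕ) (hD : 0 < D) (γ : ℝ) (hγ : 0 < γ)
    (F : EuclideanSpace ℝ (Fin D) → ℝ) (M₂ : ℝ)
    (hconv : ConvexOn ℝ Set.univ F)
    (hlip : ∀ x y : EuclideanSpace ℝ (Fin D), |F y - F x| ≤ M₂ * ‖y - x‖) :
    (∀ x, F x ≤ smoothed D F γ x ∧ smoothed D F γ x ≤ F x + γ * M₂) ∧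
      (∀ x y, |smoothed D F γ y - smoothed D F γ x| ≤ M₂ * ‖y - x‖) := by
  have : Nonempty (Fin D) := ⟨⟨0, hD⟩⟩
  have hM := nonneg_of_abs_sub_le_mul_norm hlip
  have hF : LipschitzWith ⟨M₂, hM⟩ F := LipschitzWith.of_dist_le_mul fun x y => by
    rw [Real.dist_eq, abs_sub_comm, dist_comm, dist_eq_norm]
    exact hlip x y
  have hFi (x) : Integrable (fun u => F (x + γ • u)) (uniformBall D) :=
    (hF.continuous.comp (continuous_const.add (continuous_const_smul γ))).integrable_uniformBall
  refine ⟨fun x => ⟨?_, ?_⟩, fun x y => ?_⟩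
  · exact hconv.le_integral_comp_add_smul hF.continuous continuous_id'.integrable_uniformBall
      (integral_id_uniformBall D) x (hFi x)
  · exact hF.integral_comp_add_smul_le hγ.le (ae_norm_le_one_uniformBall D) x (hFi x)
  · have h := (hF.integral_comp_add hFi).dist_le_mul y x
    rwa [Real.dist_eq, dist_eq_norm] at h
end
end
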